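/- arXiv:1402.1995 — 2 statements merged into one kernel-verified Lean document; each statement's English description precedes it below -/
import Mathlib

section
/- With p(t) = p₀(1 - σ̂(t))^{1/(1+θ)} and I(t) = I₀(1 - σ̂(t))^{θ/(1+θ)} as in the one-item markdown solution, the total markdown revenue ∫₀^T p(t)·S(I(t),p(t))·σ(t) dt equals p₀·I₀·θ/(1+θ); in particular it is strictly less than the initial potential revenue p₀·I₀. -/
/-!
Along the closed-form trajectory the revenue rate `p · S(I, p)` is constant: writing
`u = 1 - σ̂(t)`, the powers of `u` carry total exponent `(1 + θα + γ)/(1 + θ) = 0` because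
`θα = -(γ + 1)`, and the normalisation of `S₀` makes the constant `p₀ I₀ θ/(1 + θ)`.
Integrating this constant against the probability density `σ` gives the total revenue.
The one subtlety is the junk value `0 ^ x = 0` of `Real.rpow` where the remaining mass
`u` vanishes; but wherever `σ t > 0` with `t < T`, continuity forces `∫ₜᵀ σ > 0`, i.e. `u > 0`.
-/

open MeasureTheory Set

lemma intervalIntegral_lt_of_pos_at {σ : ℝ → ℝ} {a b t : ℝ}
    (hσc : ContinuousOn σ (Icc a b)) (hσnn : ∀ x ∈ Icc a b, 0 ≤ σ x)
    (ht : t ∈ Ico a b) (hσt : 0 < σ t) :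
    ∫ x in a..t, σ x < ∫ x in a..b, σ x := by
  have hint : ∀ c ∈ Icc a b, ∀ d ∈ Icc a b, IntervalIntegrable σ volume c d :=
    fun c hc d hd => (hσc.mono (uIcc_subset_Icc hc hd)).intervalIntegrable
  have htmem : t ∈ Icc a b := Ico_subset_Icc_self ht
  have htail : 0 < ∫ x in t..b, σ x :=
    intervalIntegral.integral_pos ht.2 (hσc.mono (Icc_subset_Icc_left ht.1))
      (fun x hx => hσnn x ⟨ht.1.trans hx.1.le, hx.2⟩) ⟨t, left_mem_Icc.2 ht.2.le, hσt⟩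
  rw [← intervalIntegral.integral_add_adjacent_intervals
    (hint a (left_mem_Icc.2 (ht.1.trans ht.2.le)) t htmem)
    (hint t htmem b (right_mem_Icc.2 (ht.1.trans ht.2.le)))]
  linarith

lemma revenue_rate_eq_of_exponents_cancel {θ α γ p₀ I₀ S₀ u : ℝ}
    (hp₀ : 0 ≤ p₀) (hI₀ : 0 ≤ I₀) (hu : 0 < u) (hθ : 1 + θ ≠ 0)
    (hθα : θ * α = -(γ + 1)) :
    p₀ * u ^ (1 / (1 + θ)) *
        (S₀ * (I₀ * u ^ (θ / (1 + θ))) ^ α * (p₀ * u ^ (1 / (1 + θ))) ^ γ)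
      = p₀ * (S₀ * I₀ ^ α * p₀ ^ γ) := by
  have hexp : 1 / (1 + θ) + θ / (1 + θ) * α + 1 / (1 + θ) * γ = 0 := by
    field_simp
    linarith
  rw [Real.mul_rpow hI₀ (Real.rpow_nonneg hu.le _), Real.mul_rpow hp₀ (Real.rpow_nonneg hu.le _),
    ← Real.rpow_mul hu.le, ← Real.rpow_mul hu.le]
  calc p₀ * u ^ (1 / (1 + θ)) *
        (S₀ * (I₀ ^ α * u ^ (θ / (1 + θ) * α)) * (p₀ ^ γ * u ^ (1 / (1 + θ) * γ)))
      = p₀ * (S₀ * I₀ ^ α * p₀ ^ γ) *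
          (u ^ (1 / (1 + θ)) * u ^ (θ / (1 + θ) * α) * u ^ (1 / (1 + θ) * γ)) := by ring
    _ = p₀ * (S₀ * I₀ ^ α * p₀ ^ γ) := by
      rw [← Real.rpow_add hu, ← Real.rpow_add hu, hexp, Real.rpow_zero, mul_one]

theorem stmt7_general (T θ p₀ I₀ S₀ α γ : ℝ) (σ : ℝ → ℝ)
    (hT : 0 < T) (hθ : 0 < θ) (hp₀ : 0 < p₀) (hI₀ : 0 < I₀)
    (hα : 0 < α) (hθdef : θ = -(γ + 1) / α)
    (hσc : ContinuousOn σ (Set.Icc 0 T)) (hσnn : ∀ t ∈ Set.Icc 0 T, 0 ≤ σ t)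
    (hσint : (∫ t in (0:ℝ)..T, σ t) = 1)
    (hS₀ : S₀ * I₀ ^ α * p₀ ^ γ = I₀ * θ / (1 + θ)) :
    (∫ t in (0:ℝ)..T,
        (p₀ * (1 - ∫ x in (0:ℝ)..t, σ x) ^ (1 / (1 + θ))) *
          (S₀ * (I₀ * (1 - ∫ x in (0:ℝ)..t, σ x) ^ (θ / (1 + θ))) ^ α *
            (p₀ * (1 - ∫ x in (0:ℝ)..t, σ x) ^ (1 / (1 + θ))) ^ γ) * σ t)
      = p₀ * I₀ * θ / (1 + θ) ∧
    p₀ * I₀ * θ / (1 + θ) < p₀ * I₀ := by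
  have h1θ : 0 < 1 + θ := by linarith
  have hθα : θ * α = -(γ + 1) := by rw [hθdef, div_mul_cancel₀ _ hα.ne']
  refine ⟨?_, ?_⟩
  · have hrate : EqOn (fun t => (p₀ * (1 - ∫ x in (0:ℝ)..t, σ x) ^ (1 / (1 + θ))) *
          (S₀ * (I₀ * (1 - ∫ x in (0:ℝ)..t, σ x) ^ (θ / (1 + θ))) ^ α *
            (p₀ * (1 - ∫ x in (0:ℝ)..t, σ x) ^ (1 / (1 + θ))) ^ γ) * σ t)
        (fun t => p₀ * I₀ * θ / (1 + θ) * σ t) (Ioo 0 T) := by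
      intro t ht
      rcases (hσnn t ⟨ht.1.le, ht.2.le⟩).eq_or_lt with hzero | hpos
      · simp only [← hzero, mul_zero]
      have hmass : 0 < 1 - ∫ x in (0:ℝ)..t, σ x := by
        linarith [intervalIntegral_lt_of_pos_at hσc hσnn ⟨ht.1.le, ht.2⟩ hpos]
      dsimp only
      rw [revenue_rate_eq_of_exponents_cancel hp₀.le hI₀.le hmass h1θ.ne' hθα, hS₀]
      ring
    rw [intervalIntegral.integral_congr_Ioo_of_le hT.le hrate,
      intervalIntegral.integral_const_mul, hσint, mul_one]
  · rw [mul_div_assoc]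
    exact mul_lt_of_lt_one_right (mul_pos hp₀ hI₀) ((div_lt_one h1θ).2 (lt_one_add θ))

/-- The total markdown revenue of the closed-form one-item solution equals
p₀·I₀·θ/(1+θ), which is strictly less than the initial potential revenue p₀·I₀. -/
theorem stmt7 (T θ p₀ I₀ S₀ α γ : ℝ) (σ : ℝ → ℝ)
    (hT : 0 < T) (hθ : 0 < θ) (hp₀ : 0 < p₀) (hI₀ : 0 < I₀)
    (hα : 0 < α) (hγ : γ < -1) (hθdef : θ = -(γ + 1) / α)
    (hσc : ContinuousOn σ (Set.Icc 0 T)) (hσnn : ∀ t ∈ Set.Icc 0 T, 0 ≤ σ t)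
    (hσint : (∫ t in (0:ℝ)..T, σ t) = 1)
    (hS₀ : S₀ * I₀ ^ α * p₀ ^ γ = I₀ * θ / (1 + θ)) :
    (∫ t in (0:ℝ)..T,
        (p₀ * (1 - ∫ x in (0:ℝ)..t, σ x) ^ (1 / (1 + θ))) *
          (S₀ * (I₀ * (1 - ∫ x in (0:ℝ)..t, σ x) ^ (θ / (1 + θ))) ^ α *
            (p₀ * (1 - ∫ x in (0:ℝ)..t, σ x) ^ (1 / (1 + θ))) ^ γ) * σ t)
      = p₀ * I₀ * θ / (1 + θ) ∧
    p₀ * I₀ * θ / (1 + θ) < p₀ * I₀ :=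
  stmt7_general T θ p₀ I₀ S₀ α γ σ hT hθ hp₀ hI₀ hα hθdef hσc hσnn hσint hS₀
end

section
/- Let Γ be an invertible n×n real matrix, R a vector with all coordinates positive, c a vector, and suppose λ = -p·R⁻¹·(1 + (Γᵀ)⁻¹)·R componentwise equals -c (continuous-replenishment first-order condition λ = -c with p the price vector and R = p·S the revenue vector). Then the generalized Lerner rule holds: Γᵀ (l · R) = -R, where l = (p - c)/p is the vector of Lerner indices (componentwise operations). -/
open Matrix

/-! The first-order condition with `λ = -c` says `c = p (1 + R⁻¹ (Γᵀ)⁻¹ R)` componentwise, so the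
Lerner index times revenue is `l R = -(Γᵀ)⁻¹ R`; applying `Γᵀ` gives the rule. -/

theorem lerner_mul_revenue_of_first_order {K : Type*} [Field K] {p c r a : K} (hp : p ≠ 0)
    (hr : r ≠ 0) (hfoc : -p * r⁻¹ * (r + a) = -c) : (p - c) / p * r = -a := by
  rw [show c = p * r⁻¹ * (r + a) by linear_combination hfoc]
  field_simp
  ring

theorem lerner_mul_revenue_eq_neg_mulVec {K ι : Type*} [Field K] [Fintype ι] [DecidableEq ι]
    (A : Matrix ι ι K) {p c R : ι → K} (hp : ∀ i, p i ≠ 0) (hR : ∀ i, R i ≠ 0)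
    (hfoc : ∀ i, -(p i) * (R i)⁻¹ * ((1 + A) *ᵥ R) i = -(c i)) :
    (fun i => (p i - c i) / p i * R i) = -(A *ᵥ R) := by
  funext i
  refine lerner_mul_revenue_of_first_order (hp i) (hR i) ?_
  simpa only [add_mulVec, one_mulVec, Pi.add_apply] using hfoc i

theorem mulVec_eq_neg_of_eq_neg_inv_mulVec {K ι : Type*} [Field K] [Fintype ι] [DecidableEq ι]
    {A : Matrix ι ι K} (hA : IsUnit A.det) {v w : ι → K} (hv : v = -(A⁻¹ *ᵥ w)) :
    A *ᵥ v = -w := by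
  rw [hv, mulVec_neg, mulVec_mulVec, mul_nonsing_inv _ hA, one_mulVec]

/-- In the continuous-replenishment case (λ = -c with
λ = -p·R⁻¹·(1 + (Γᵀ)⁻¹)·R componentwise), the generalized Lerner rule
Γᵀ(l·R) = -R holds, where l = (p-c)/p is the Lerner index vector. -/
theorem stmt8 {n : ℕ} (Γ : Matrix (Fin n) (Fin n) ℝ) (hΓ : IsUnit Γ.det)
    (p c R : Fin n → ℝ) (hp : ∀ i, 0 < p i) (hR : ∀ i, 0 < R i)
    (hlam : ∀ i, -(p i) * (R i)⁻¹ * ((1 + (Γᵀ)⁻¹).mulVec R) i = -(c i)) :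
    Γᵀ.mulVec (fun i => (p i - c i) / p i * R i) = -R :=
  mulVec_eq_neg_of_eq_neg_inv_mulVec (by rwa [det_transpose])
    (lerner_mul_revenue_eq_neg_mulVec _ (fun i => (hp i).ne') (fun i => (hR i).ne') hlam)
end
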